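/- Let f and g be probability densities on a common support with finite exponential moments for t(y) = (1, y, …, y^p), and suppose f(y)/g(y) = exp(⟨t(y), γ⟩) for some γ ∈ ℝ^{p+1} (f is an exponential tilt of g). If all moments of order 1 through p agree, ∫ y^d f(y) dy = ∫ y^d g(y) dy for d = 1,…,p, and the covariance matrix of (y,…,y^p) under every intermediate tilt is positive definite, then γ = 0 and hence f = g almost everywhere. -/

import Mathlib

open MeasureTheory Real Matrix


lemma exp_sub_one_mul_nonneg (x : ℝ) : 0 ≤ (Real.exp x - 1) * x := by
  rcases le_or_gt 0 x with h | h
  · have h1 : 0 ≤ Real.exp x - 1 := by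
      have := Real.one_le_exp_iff.mpr h
      linarith
    exact mul_nonneg h1 h
  · have h1 : Real.exp x - 1 ≤ 0 := by
      have := Real.exp_le_one_iff.mpr h.le
      linarith
    exact mul_nonneg_iff.mpr (Or.inr ⟨h1, h.le⟩)

lemma exp_sub_one_mul_eq_zero {x : ℝ} (h : (Real.exp x - 1) * x = 0) : x = 0 := by
  rcases mul_eq_zero.mp h with h' | h'
  · have : Real.exp x = 1 := by linarith
    simpa using this
  · exact h'

lemma integrable_of_ae_finite {ν : Measure ℝ} {g φ : ℝ → ℝ}
    (hg : Integrable g ν) (hgn : ∀ y, 0 ≤ g y) (hφ : Continuous φ)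
    {s : Set ℝ} (hs : s.Finite)
    (hae : ∀ᵐ y ∂ν, g y = 0 ∨ y ∈ s) :
    Integrable (fun y => φ y * g y) ν := by
  obtain ⟨B, hB⟩ := (hs.image (fun y => |φ y|)).bddAbove
  refine (hg.const_mul B).mono'
    (hφ.aestronglyMeasurable.mul hg.aestronglyMeasurable) ?_
  filter_upwards [hae] with y hy
  rcases hy with hy | hy
  · simp [hy]
  · have h1 : |φ y| ≤ B := hB (Set.mem_image_of_mem _ hy)
    have heq : ‖φ y * g y‖ = |φ y| * g y := by
      rw [norm_mul, Real.norm_eq_abs, Real.norm_eq_abs, abs_of_nonneg (hgn y)]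
    rw [heq]
    exact mul_le_mul_of_nonneg_right h1 (hgn y)

/-- identifiability. If `f` is an exponential tilt of `g` with
respect to `t(y) = (1, y, …, y^p)`, the moments of order `1,…,p` of `f` and `g`
agree, and the covariance of `(y, …, y^p)` under every intermediate tilt `g_s`
is positive definite, then the tilting parameter vanishes and `f = g`. -/
theorem exponential_tilt_identifiability
    (ν : Measure ℝ) (p : ℕ)
    (f g : ℝ → ℝ)
    (hf_nonneg : ∀ y, 0 ≤ f y) (hg_nonneg : ∀ y, 0 ≤ g y)
    (hf_int : ∫ y, f y ∂ν = 1) (hg_int : ∫ y, g y ∂ν = 1)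
    (γ0 : ℝ) (γc : Fin p → ℝ)
    -- f is an exponential tilt of g : f(y) = g(y) exp(γ₀ + Σ_d γ_d y^d)
    (htilt : ∀ y, f y = g y * Real.exp (γ0 + ∑ d, γc d * y ^ ((d : ℕ) + 1)))
    -- moments of order 1 through p agree
    (hmom : ∀ d : Fin p, ∫ y, y ^ ((d : ℕ) + 1) * f y ∂ν
      = ∫ y, y ^ ((d : ℕ) + 1) * g y ∂ν)
    (hmom_int_f : ∀ d : Fin p, Integrable (fun y => y ^ ((d : ℕ) + 1) * f y) ν)
    (hmom_int_g : ∀ d : Fin p, Integrable (fun y => y ^ ((d : ℕ) + 1) * g y) ν)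
    -- intermediate tilts g_s ∝ g exp(s (γ₀ + Σ γ_d y^d)), with normalizers c s
    (c : ℝ → ℝ)
    (hc : ∀ s, c s = ∫ y, g y *
      Real.exp (s * (γ0 + ∑ d, γc d * y ^ ((d : ℕ) + 1))) ∂ν)
    (hc_pos : ∀ s ∈ Set.Icc (0 : ℝ) 1, 0 < c s)
    (gs : ℝ → ℝ → ℝ)
    (hgs : ∀ s y, gs s y = g y *
      Real.exp (s * (γ0 + ∑ d, γc d * y ^ ((d : ℕ) + 1))) / c s)
    (μs : ℝ → Fin p → ℝ)
    (hμs : ∀ s d, μs s d = ∫ y, y ^ ((d : ℕ) + 1) * gs s y ∂ν)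
    -- positive-definite covariance of (y, …, y^p) under every intermediate tilt
    (hPD : ∀ s ∈ Set.Icc (0 : ℝ) 1,
      (Matrix.of fun d e : Fin p =>
        ∫ y, (y ^ ((d : ℕ) + 1) - μs s d) * (y ^ ((e : ℕ) + 1) - μs s e) *
          gs s y ∂ν).PosDef) :
    γ0 = 0 ∧ γc = 0 ∧ ∀ y, f y = g y := by
  have hf_integrable : Integrable f ν := by
    by_contra h
    rw [integral_undef h] at hf_int; norm_num at hf_int
  have hg_integrable : Integrable g ν := by
    by_contra h
    rw [integral_undef h] at hg_int; norm_num at hg_int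
  set L : ℝ → ℝ := fun y => γ0 + ∑ d, γc d * y ^ ((d : ℕ) + 1) with hL
  have htiltL : ∀ y, f y = g y * Real.exp (L y) := htilt
  -- integrability and value of ∫ f·L and ∫ g·L
  have hfL : ∀ y, f y * L y = γ0 * f y + ∑ d, γc d * (y ^ ((d : ℕ) + 1) * f y) := by
    intro y
    simp only [hL]
    rw [mul_comm, add_mul, Finset.sum_mul]
    congr 1
    exact Finset.sum_congr rfl fun d _ => by ring
  have hgL : ∀ y, g y * L y = γ0 * g y + ∑ d, γc d * (y ^ ((d : ℕ) + 1) * g y) := by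
    intro y
    simp only [hL]
    rw [mul_comm, add_mul, Finset.sum_mul]
    congr 1
    exact Finset.sum_congr rfl fun d _ => by ring
  have hfL_int : Integrable (fun y => f y * L y) ν := by
    rw [show (fun y => f y * L y)
        = fun y => γ0 * f y + ∑ d, γc d * (y ^ ((d : ℕ) + 1) * f y) from funext hfL]
    exact (hf_integrable.const_mul γ0).add
      (integrable_finset_sum _ fun d _ => (hmom_int_f d).const_mul (γc d))
  have hgL_int : Integrable (fun y => g y * L y) ν := by
    rw [show (fun y => g y * L y)
        = fun y => γ0 * g y + ∑ d, γc d * (y ^ ((d : ℕ) + 1) * g y) from funext hgL]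
    exact (hg_integrable.const_mul γ0).add
      (integrable_finset_sum _ fun d _ => (hmom_int_g d).const_mul (γc d))
  have hfL_val : ∫ y, f y * L y ∂ν
      = γ0 * (∫ y, f y ∂ν) + ∑ d, γc d * ∫ y, y ^ ((d : ℕ) + 1) * f y ∂ν := by
    rw [show (fun y => f y * L y)
        = fun y => γ0 * f y + ∑ d, γc d * (y ^ ((d : ℕ) + 1) * f y) from funext hfL]
    rw [integral_add (hf_integrable.const_mul γ0)
      (integrable_finset_sum _ fun d _ => (hmom_int_f d).const_mul (γc d)),
      integral_const_mul, integral_finset_sum _ fun d _ => (hmom_int_f d).const_mul (γc d)]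
    congr 1
    exact Finset.sum_congr rfl fun d _ => integral_const_mul _ _
  have hgL_val : ∫ y, g y * L y ∂ν
      = γ0 * (∫ y, g y ∂ν) + ∑ d, γc d * ∫ y, y ^ ((d : ℕ) + 1) * g y ∂ν := by
    rw [show (fun y => g y * L y)
        = fun y => γ0 * g y + ∑ d, γc d * (y ^ ((d : ℕ) + 1) * g y) from funext hgL]
    rw [integral_add (hg_integrable.const_mul γ0)
      (integrable_finset_sum _ fun d _ => (hmom_int_g d).const_mul (γc d)),
      integral_const_mul, integral_finset_sum _ fun d _ => (hmom_int_g d).const_mul (γc d)]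
    congr 1
    exact Finset.sum_congr rfl fun d _ => integral_const_mul _ _
  -- the Gibbs/variational step
  have hsub : ∀ y, (f y - g y) * L y = g y * ((Real.exp (L y) - 1) * L y) := by
    intro y
    rw [htiltL y]; ring
  have hnn : ∀ y, 0 ≤ (f y - g y) * L y := fun y => by
    rw [hsub y]; exact mul_nonneg (hg_nonneg y) (exp_sub_one_mul_nonneg _)
  have hint : Integrable (fun y => (f y - g y) * L y) ν := by
    have h : Integrable (fun y => f y * L y - g y * L y) ν := hfL_int.sub hgL_int
    simpa [sub_mul] using h
  have hI0 : ∫ y, (f y - g y) * L y ∂ν = 0 := by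
    have heq : (fun y => (f y - g y) * L y) = fun y => f y * L y - g y * L y :=
      funext fun y => by ring
    rw [heq, integral_sub hfL_int hgL_int, hfL_val, hgL_val, hf_int, hg_int]
    have hs : ∑ d, γc d * ∫ y, y ^ ((d : ℕ) + 1) * f y ∂ν
        = ∑ d, γc d * ∫ y, y ^ ((d : ℕ) + 1) * g y ∂ν :=
      Finset.sum_congr rfl fun d _ => by rw [hmom d]
    rw [hs]; ring
  have hae0 : (fun y => (f y - g y) * L y) =ᵐ[ν] 0 :=
    (integral_eq_zero_iff_of_nonneg hnn hint).mp hI0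
  have haeroot : ∀ᵐ y ∂ν, g y = 0 ∨ L y = 0 := by
    filter_upwards [hae0] with y hy
    have hy' : (f y - g y) * L y = 0 := hy
    rw [hsub y] at hy'
    rcases mul_eq_zero.mp hy' with h | h
    · exact Or.inl h
    · exact Or.inr (exp_sub_one_mul_eq_zero h)
  -- γc = 0
  have hγc : γc = 0 := by
    by_contra hne
    obtain ⟨d0, hd0⟩ := Function.ne_iff.mp hne
    set Q : Polynomial ℝ :=
      Polynomial.C γ0 + ∑ d : Fin p, Polynomial.C (γc d) * Polynomial.X ^ ((d : ℕ) + 1)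
      with hQ
    have hQeval : ∀ y, Q.eval y = L y := by
      intro y
      simp [hQ, hL, Polynomial.eval_finset_sum]
    have hQne : Q ≠ 0 := by
      intro h
      have hco : Q.coeff ((d0 : ℕ) + 1) = γc d0 := by
        simp only [hQ, Polynomial.coeff_add, Polynomial.finset_sum_coeff,
          Polynomial.coeff_C_mul, Polynomial.coeff_X_pow, Polynomial.coeff_C]
        rw [if_neg (by omega), Finset.sum_eq_single d0]
        · simp
        · intro d _ hd
          rw [if_neg, mul_zero]
          intro hcontra
          exact hd (Fin.ext (by omega))
        · intro h; exact absurd (Finset.mem_univ d0) h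
      rw [h] at hco
      simp at hco
      exact hd0 (by simpa using hco.symm)
    have hroots : {y : ℝ | L y = 0}.Finite := by
      refine (Polynomial.finite_setOf_isRoot hQne).subset ?_
      intro y hy
      simpa [Polynomial.IsRoot, hQeval y] using hy
    have haeS : ∀ᵐ y ∂ν, g y = 0 ∨ y ∈ {y : ℝ | L y = 0} := haeroot
    set m : Fin p → ℝ := fun d => ∫ y, y ^ ((d : ℕ) + 1) * g y ∂ν with hm
    have hc0 : c 0 = 1 := by
      rw [hc 0]
      simpa using hg_int
    have hgs0 : ∀ y, gs 0 y = g y := by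
      intro y; rw [hgs 0 y, hc0]; simp
    have hμ0 : ∀ d, μs 0 d = m d := by
      intro d
      rw [hμs 0 d, hm]
      exact integral_congr_ae (Filter.Eventually.of_forall fun y => by simp only [hgs0])
    set q : ℝ → ℝ := fun y => ∑ d, γc d * (y ^ ((d : ℕ) + 1) - m d) with hq
    have hq_cont : Continuous q := by
      apply continuous_finset_sum
      intro d _
      fun_prop
    set k : ℝ := -γ0 - ∑ d, γc d * m d with hk
    have hqk : ∀ y, L y = 0 → q y = k := by
      intro y hy
      have hsum : ∑ d, γc d * y ^ ((d : ℕ) + 1) = -γ0 := by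
        simp only [hL] at hy; linarith
      simp only [hq, hk, mul_sub, Finset.sum_sub_distrib, hsum]
    have hqg_val1 : ∫ y, q y * g y ∂ν = 0 := by
      have heq : (fun y => q y * g y)
          = fun y => (∑ d, γc d * (y ^ ((d : ℕ) + 1) * g y))
              - (∑ d, γc d * m d) * g y := by
        funext y
        simp only [hq]
        rw [Finset.sum_mul, Finset.sum_mul, ← Finset.sum_sub_distrib]
        exact Finset.sum_congr rfl fun d _ => by ring
      rw [heq, integral_sub
        (integrable_finset_sum _ fun d _ => (hmom_int_g d).const_mul (γc d))
        (hg_integrable.const_mul _),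
        integral_finset_sum _ fun d _ => (hmom_int_g d).const_mul (γc d),
        integral_const_mul, hg_int, mul_one]
      rw [Finset.sum_congr rfl fun d _ => integral_const_mul (γc d) _]
      simp [hm]
    have hqg_val2 : ∫ y, q y * g y ∂ν = k := by
      have hae2 : (fun y => q y * g y) =ᵐ[ν] fun y => k * g y := by
        filter_upwards [haeroot] with y hy
        rcases hy with hy | hy
        · simp [hy]
        · rw [hqk y hy]
      rw [integral_congr_ae hae2, integral_const_mul, hg_int, mul_one]
    have hk0 : k = 0 := by rw [← hqg_val2, hqg_val1]
    -- positive definiteness at s = 0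
    have hPD0 := hPD 0 (by constructor <;> norm_num)
    have hMeq : (Matrix.of fun d e : Fin p =>
          ∫ y, (y ^ ((d : ℕ) + 1) - μs 0 d) * (y ^ ((e : ℕ) + 1) - μs 0 e) *
            gs 0 y ∂ν)
        = (Matrix.of fun d e : Fin p =>
          ∫ y, (y ^ ((d : ℕ) + 1) - m d) * (y ^ ((e : ℕ) + 1) - m e) * g y ∂ν) := by
      ext d e
      simp only [Matrix.of_apply]
      exact integral_congr_ae (Filter.Eventually.of_forall fun y => by
        simp only [hgs0, hμ0])
    rw [hMeq] at hPD0
    set M : Matrix (Fin p) (Fin p) ℝ := Matrix.of fun d e : Fin p =>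
      ∫ y, (y ^ ((d : ℕ) + 1) - m d) * (y ^ ((e : ℕ) + 1) - m e) * g y ∂ν with hM
    have hint_de : ∀ d e : Fin p, Integrable
        (fun y => (y ^ ((d : ℕ) + 1) - m d) * (y ^ ((e : ℕ) + 1) - m e) * g y) ν := by
      intro d e
      exact integrable_of_ae_finite hg_integrable hg_nonneg (by fun_prop) hroots haeS
    have hint_dq : ∀ d : Fin p, Integrable
        (fun y => (y ^ ((d : ℕ) + 1) - m d) * q y * g y) ν := by
      intro d
      exact integrable_of_ae_finite hg_integrable hg_nonneg (by fun_prop) hroots haeS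
    have hrow : ∀ d : Fin p, ∑ e, M d e * γc e
        = ∫ y, (y ^ ((d : ℕ) + 1) - m d) * q y * g y ∂ν := by
      intro d
      have h1 : ∀ e : Fin p, M d e * γc e
          = ∫ y, γc e * ((y ^ ((d : ℕ) + 1) - m d) * (y ^ ((e : ℕ) + 1) - m e) * g y) ∂ν := by
        intro e
        rw [integral_const_mul]
        simp only [hM, Matrix.of_apply]
        ring
      rw [Finset.sum_congr rfl fun e _ => h1 e,
        ← integral_finset_sum _ fun e _ => (hint_de d e).const_mul (γc e)]
      refine integral_congr_ae (Filter.Eventually.of_forall fun y => ?_)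
      calc ∑ e : Fin p, γc e *
            ((y ^ ((d : ℕ) + 1) - m d) * (y ^ ((e : ℕ) + 1) - m e) * g y)
          = (∑ e : Fin p, γc e * (y ^ ((e : ℕ) + 1) - m e))
              * ((y ^ ((d : ℕ) + 1) - m d) * g y) := by
            rw [Finset.sum_mul]
            exact Finset.sum_congr rfl fun e _ => by ring
        _ = (y ^ ((d : ℕ) + 1) - m d) * q y * g y := by
            rw [show (∑ e : Fin p, γc e * (y ^ ((e : ℕ) + 1) - m e)) = q y from rfl]
            ring
    have hform_eq : dotProduct γc (M.mulVec γc) = ∫ y, q y * q y * g y ∂ν := by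
      have hsum : dotProduct γc (M.mulVec γc)
          = ∑ d, ∫ y, γc d * ((y ^ ((d : ℕ) + 1) - m d) * q y * g y) ∂ν := by
        simp only [dotProduct, Matrix.mulVec]
        refine Finset.sum_congr rfl fun d _ => ?_
        rw [hrow d]
        exact (integral_const_mul _ _).symm
      rw [hsum, ← integral_finset_sum _ fun d _ => ((hint_dq d).const_mul (γc d))]
      refine integral_congr_ae (Filter.Eventually.of_forall fun y => ?_)
      calc ∑ d : Fin p, γc d * ((y ^ ((d : ℕ) + 1) - m d) * q y * g y)
          = (∑ d : Fin p, γc d * (y ^ ((d : ℕ) + 1) - m d)) * (q y * g y) := by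
            rw [Finset.sum_mul]
            exact Finset.sum_congr rfl fun d _ => by ring
        _ = q y * q y * g y := by
            rw [show (∑ d : Fin p, γc d * (y ^ ((d : ℕ) + 1) - m d)) = q y from rfl]
            ring
    have hzero : ∫ y, q y * q y * g y ∂ν = 0 := by
      have hae3 : (fun y => q y * q y * g y) =ᵐ[ν] 0 := by
        filter_upwards [haeroot] with y hy
        rcases hy with hy | hy
        · simp [hy]
        · simp [hqk y hy, hk0]
      rw [integral_congr_ae hae3]
      simp
    have hpos := hPD0.dotProduct_mulVec_pos hne
    rw [show star γc = γc from star_trivial γc] at hpos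
    rw [hform_eq, hzero] at hpos
    exact lt_irrefl 0 hpos
  -- γ0 = 0
  have hfg0 : ∀ y, f y = g y * Real.exp γ0 := by
    intro y
    rw [htilt y]
    simp [hγc]
  have hexp1 : Real.exp γ0 = 1 := by
    have h1 : ∫ y, f y ∂ν = (∫ y, g y ∂ν) * Real.exp γ0 := by
      rw [integral_congr_ae (Filter.Eventually.of_forall hfg0), integral_mul_const]
    rw [hf_int, hg_int, one_mul] at h1
    exact h1.symm
  have hγ0 : γ0 = 0 := by simpa using hexp1
  exact ⟨hγ0, hγc, fun y => by rw [htilt y]; simp [hγ0, hγc]⟩
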